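/- (Exchangeability) Let σ be a chip configuration and ρ, ρ' two collections of rotor stacks such that for each vertex x, the finite sequences ρ'_1(x),…,ρ'_{u(ρ,σ)(x)−1}(x) and ρ_1(x),…,ρ_{u(ρ,σ)(x)−1}(x) are permutations of each other, and ρ_{u(ρ,σ)(x)}(x) = ρ'_{u(ρ,σ)(x)}(x). Then the odometers agree: u(ρ',σ) = u(ρ,σ). -/

import Mathlib

open scoped BigOperators

open Classical in
/-- Number of occurrences of the edge `e` among the rotors `ρ_1(s e), …, ρ_n(s e)`. -/
noncomputable def Rcount {V E : Type*} (src : E → V) (ρ : V → ℕ → E) (e : E) (n : ℕ) : ℕ :=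
  ((Finset.Icc 1 n).filter fun k => ρ (src e) k = e).card

open Classical in
/-- The stack Laplacian `Δ_ρ u (x) = Σ_{t(e)=x} R_ρ(e, u(s e)) − u x`. -/
noncomputable def stackLap {V E : Type*} (src tgt : E → V) (ρ : V → ℕ → E)
    (u : V → ℕ) (x : V) : ℤ :=
  (∑ᶠ e : E, if tgt e = x then (Rcount src ρ e (u (src e)) : ℤ) else 0) - u x

/-- A rotor configuration `r` is acyclic on `A`: every nonempty finite subset of `A`
contains a vertex whose rotor points outside the subset. -/
def AcyclicOn {V E : Type*} (tgt : E → V) (r : V → E) (A : Set V) : Prop :=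
  ∀ A' ⊆ A, A'.Finite → A'.Nonempty → ∃ x ∈ A', tgt (r x) ∉ A'

/-- `u` is the odometer of the chip configuration `σ` with rotor stacks `ρ`:
`u` has finite support, `σ + Δ_ρ u ≤ 1` everywhere, `σ + Δ_ρ u = 1` on the support
of `u`, and the top rotors `Top_ρ(u)` are acyclic on the support of `u`. -/
def IsOdometer {V E : Type*} (src tgt : E → V) (ρ : V → ℕ → E)
    (σ : V → ℤ) (u : V → ℕ) : Prop :=
  (Function.support u).Finite ∧
  (∀ x, σ x + stackLap src tgt ρ u x ≤ 1) ∧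
  (∀ x, u x ≠ 0 → σ x + stackLap src tgt ρ u x = 1) ∧
  AcyclicOn tgt (fun x => ρ x (u x)) (Function.support u)

/-!
The hypotheses make `ρ` and `ρ'` agree, as multisets, on the first `u(x)` rotors at every
vertex and on the top rotor `ρ_{u(x)}(x)`; hence `Δ_ρ u = Δ_ρ' u` and `Top_ρ(u) = Top_ρ'(u)`,
so `u` is also an odometer for `ρ'`, and the theorem reduces to uniqueness of odometers.

Uniqueness is a flow argument. If `u'` is an odometer and `σ + Δ_ρ u ≤ 1`, suppose
`A = {u < u'}` is nonempty and consider the surplus flow `D(e) = R(e, u'(s e)) − R(e, u(s e))`.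
It is nonnegative on edges leaving `A`, nonpositive on edges leaving its complement, and at each
vertex of `A` its outflow `u' − u` is at most its inflow. Summing over `A`, no edge from `A` to
its complement carries positive flow. But `Top_ρ(u')` is acyclic on `A`, so some `x ∈ A` has
its top rotor `ρ_{u'(x)}(x)` pointing out of `A`, and that edge was fired once more under `u'`.
-/

section Rcount

open Classical

variable {V E : Type*} (src : E → V) (ρ : V → ℕ → E)

theorem Rcount_eq_countP_map (e : E) (n : ℕ) :
    Rcount src ρ e n = ((Finset.Icc 1 n).val.map (ρ (src e))).countP (· = e) := by
  rw [Rcount, Multiset.countP_map]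
  rfl

theorem Rcount_mono (e : E) {m n : ℕ} (h : m ≤ n) : Rcount src ρ e m ≤ Rcount src ρ e n :=
  Finset.card_le_card (Finset.filter_subset_filter _ (Finset.Icc_subset_Icc_right h))

theorem Rcount_lt_Rcount_of_lt {x : V} {n : ℕ} (hx : src (ρ x n) = x) {m : ℕ} (h : m < n) :
    Rcount src ρ (ρ x n) m < Rcount src ρ (ρ x n) n := by
  refine Finset.card_lt_card ⟨Finset.filter_subset_filter _ (Finset.Icc_subset_Icc_right h.le),
    fun hsub => ?_⟩
  have hn : n ∈ (Finset.Icc 1 n).filter fun k => ρ (src (ρ x n)) k = ρ x n :=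
    Finset.mem_filter.2 ⟨Finset.mem_Icc.2 ⟨by omega, le_rfl⟩, by rw [hx]⟩
  have := (Finset.mem_Icc.1 (Finset.mem_filter.1 (hsub hn)).1).2
  omega

theorem Rcount_eq_zero_of_notMem_image (e : E) {m n : ℕ} (hnm : n ≤ m)
    (he : e ∉ (Finset.Icc 1 m).image (ρ (src e))) : Rcount src ρ e n = 0 := by
  rw [Rcount, Finset.card_eq_zero, Finset.filter_eq_empty_iff]
  exact fun k hk hke => he (Finset.mem_image.2 ⟨k, Finset.Icc_subset_Icc_right hnm hk, hke⟩)

variable {src ρ}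

theorem sum_Rcount_eq {x : V} (hsrc : ∀ k, src (ρ x k) = x) {s : Finset E} {n : ℕ}
    (hs : (Finset.Icc 1 n).image (ρ x) ⊆ s) (hsx : ∀ e ∈ s, src e = x) :
    ∑ e ∈ s, Rcount src ρ e n = n := by
  rw [← Finset.sum_subset hs fun e he hne =>
    Rcount_eq_zero_of_notMem_image src ρ e le_rfl (by rwa [hsx e he])]
  calc ∑ e ∈ (Finset.Icc 1 n).image (ρ x), Rcount src ρ e n
      = ∑ e ∈ (Finset.Icc 1 n).image (ρ x), ((Finset.Icc 1 n).filter (ρ x · = e)).card :=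
        Finset.sum_congr rfl fun e he => by
          obtain ⟨k, -, rfl⟩ := Finset.mem_image.1 he
          rw [Rcount, hsrc]
    _ = n := by
        rw [← Finset.card_eq_sum_card_image, Nat.card_Icc, Nat.add_sub_cancel]

end Rcount

open Classical in
theorem tgt_mem_of_outflow_le_inflow {V E : Type*} (src tgt : E → V) (F : Finset E)
    (A : Finset V) (D : E → ℤ)
    (hbal : ∀ x ∈ A, ∑ e ∈ F with src e = x, D e ≤ ∑ e ∈ F with tgt e = x, D e)
    (hpos : ∀ e ∈ F, src e ∈ A → 0 ≤ D e) (hneg : ∀ e ∈ F, src e ∉ A → D e ≤ 0)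
    {e₀ : E} (he₀ : e₀ ∈ F) (hsrc : src e₀ ∈ A) (hD : 0 < D e₀) : tgt e₀ ∈ A := by
  by_contra htgt
  set inner := ∑ e ∈ F with src e ∈ A ∧ tgt e ∈ A, D e
  have hout : ∑ e ∈ F with src e ∈ A, D e =
      inner + ∑ e ∈ F with src e ∈ A ∧ tgt e ∉ A, D e := by
    rw [← Finset.sum_filter_add_sum_filter_not (F.filter (src · ∈ A)) (tgt · ∈ A),
      Finset.filter_filter, Finset.filter_filter]
  have hin : ∑ e ∈ F with tgt e ∈ A, D e ≤ inner := by
    rw [← Finset.sum_filter_add_sum_filter_not (F.filter (tgt · ∈ A)) (src · ∈ A),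
      Finset.filter_filter, Finset.filter_filter]
    have hleave : ∑ e ∈ F with tgt e ∈ A ∧ src e ∉ A, D e ≤ 0 :=
      Finset.sum_nonpos fun e he => hneg e (Finset.mem_filter.1 he).1 (Finset.mem_filter.1 he).2.2
    simp only [inner, and_comm] at hleave ⊢
    omega
  have hexit : D e₀ ≤ ∑ e ∈ F with src e ∈ A ∧ tgt e ∉ A, D e :=
    Finset.single_le_sum
      (fun e he => hpos e (Finset.mem_filter.1 he).1 (Finset.mem_filter.1 he).2.1)
      (Finset.mem_filter.2 ⟨he₀, hsrc, htgt⟩)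
  have hsum : ∑ e ∈ F with src e ∈ A, D e ≤ ∑ e ∈ F with tgt e ∈ A, D e := by
    rw [← Finset.sum_fiberwise_eq_sum_filter, ← Finset.sum_fiberwise_eq_sum_filter]
    exact Finset.sum_le_sum hbal
  omega

section Odometer

open Classical

variable {V E : Type*} {src tgt : E → V} {ρ : V → ℕ → E}

theorem stackLap_eq_sum (hloc : ∀ x : V, {e : E | tgt e = x}.Finite) (u : V → ℕ) (x : V) :
    stackLap src tgt ρ u x =
      ∑ e ∈ (hloc x).toFinset, (Rcount src ρ e (u (src e)) : ℤ) - u x := by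
  rw [stackLap, finsum_eq_finsetSum_of_support_subset _ (s := (hloc x).toFinset)]
  · congr 1
    exact Finset.sum_congr rfl fun e he => if_pos ((hloc x).mem_toFinset.1 he)
  · intro e he
    by_contra h
    exact he (if_neg (by simpa using h))

theorem stackLap_congr {ρ' : V → ℕ → E} {u : V → ℕ}
    (h : ∀ e, Rcount src ρ e (u (src e)) = Rcount src ρ' e (u (src e))) :
    stackLap src tgt ρ u = stackLap src tgt ρ' u := by
  funext x
  simp only [stackLap, h]

theorem IsOdometer.le_of_stable (hsrc : ∀ x k, src (ρ x k) = x)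
    (hloc : ∀ x : V, {e : E | tgt e = x}.Finite) {σ : V → ℤ} {u u' : V → ℕ}
    (hu' : IsOdometer src tgt ρ σ u') (hle : ∀ x, σ x + stackLap src tgt ρ u x ≤ 1) :
    u' ≤ u := by
  obtain ⟨hfin', -, heq', hacyc'⟩ := hu'
  intro x₁
  by_contra! hx₁
  set A : Finset V := hfin'.toFinset.filter fun x => u x < u' x
  have hA : ∀ x, x ∈ A ↔ u x < u' x := fun x => by
    simp only [A, Finset.mem_filter, Set.Finite.mem_toFinset, Function.mem_support]
    omega
  -- all edges into `A`, and all edges out of `A` on which `D` can be nonzero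
  set F : Finset E := A.biUnion (fun y => (hloc y).toFinset) ∪
    A.biUnion fun y => (Finset.Icc 1 (u' y)).image (ρ y)
  set D : E → ℤ := fun e => Rcount src ρ e (u' (src e)) - Rcount src ρ e (u (src e))
  have hpos : ∀ e ∈ F, src e ∈ A → 0 ≤ D e := fun e _ he => by
    have := Rcount_mono src ρ e ((hA _).1 he).le
    simp only [D]
    omega
  have hneg : ∀ e ∈ F, src e ∉ A → D e ≤ 0 := fun e _ he => by
    have := Rcount_mono src ρ e (not_lt.1 (mt (hA _).2 he))
    simp only [D]
    omega
  have hinflow : ∀ x ∈ A, (u' x - u x : ℤ) ≤ ∑ e ∈ F with tgt e = x, D e := by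
    intro x hxA
    have hF : F.filter (tgt · = x) = (hloc x).toFinset := by
      ext e
      simp only [F, Finset.mem_filter, Finset.mem_union, Finset.mem_biUnion,
        Set.Finite.mem_toFinset, Set.mem_ofPred_eq]
      constructor
      · exact fun h => h.2
      · rintro rfl
        exact ⟨Or.inl ⟨_, hxA, rfl⟩, rfl⟩
    have h1 := heq' x (by have := (hA x).1 hxA; omega)
    have h2 := hle x
    rw [stackLap_eq_sum hloc] at h1 h2
    rw [hF, Finset.sum_sub_distrib]
    omega
  have houtflow : ∀ x ∈ A, ∑ e ∈ F with src e = x, D e = u' x - u x := fun x hxA => by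
    have hsub : ∀ n ≤ u' x, (Finset.Icc 1 n).image (ρ x) ⊆ F.filter (src · = x) := by
      intro n hn e he
      obtain ⟨k, hk, rfl⟩ := Finset.mem_image.1 he
      have hk' := Finset.mem_image_of_mem (ρ x) (Finset.Icc_subset_Icc_right hn hk)
      exact Finset.mem_filter.2
        ⟨Finset.mem_union_right _ (Finset.mem_biUnion.2 ⟨x, hxA, hk'⟩), hsrc x k⟩
    have hsx : ∀ e ∈ F.filter (src · = x), src e = x := fun e he => (Finset.mem_filter.1 he).2
    have hD : ∀ e ∈ F.filter (src · = x),
        D e = Rcount src ρ e (u' x) - Rcount src ρ e (u x) :=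
      fun e he => by simp only [D, hsx e he]
    rw [Finset.sum_congr rfl hD, Finset.sum_sub_distrib,
      ← Nat.cast_sum, ← Nat.cast_sum, sum_Rcount_eq (hsrc x) (hsub _ le_rfl) hsx,
      sum_Rcount_eq (hsrc x) (hsub _ ((hA x).1 hxA).le) hsx]
  obtain ⟨x₀, hx₀, hexit⟩ := hacyc' A
    (fun x hx => by have := (hA x).1 hx; simp only [Function.mem_support]; omega)
    A.finite_toSet ⟨x₁, (hA x₁).2 hx₁⟩
  have hx₀' := (hA x₀).1 hx₀
  refine hexit (tgt_mem_of_outflow_le_inflow src tgt F A D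
    (fun x hx => (houtflow x hx).trans_le (hinflow x hx)) hpos hneg
    (Finset.mem_union_right _ (Finset.mem_biUnion.2 ⟨x₀, hx₀, ?_⟩)) (by rwa [hsrc]) ?_)
  · exact Finset.mem_image_of_mem _ (Finset.mem_Icc.2 ⟨by omega, le_rfl⟩)
  · have := Rcount_lt_Rcount_of_lt src ρ (hsrc x₀ _) hx₀'
    simp only [D, hsrc]
    omega

end Odometer

theorem map_Icc_eq_of_map_Icc_sub_one_eq {α : Type*} {f g : ℕ → α} {n : ℕ}
    (hlow : (Finset.Icc 1 (n - 1)).val.map f = (Finset.Icc 1 (n - 1)).val.map g)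
    (htop : f n = g n) : (Finset.Icc 1 n).val.map f = (Finset.Icc 1 n).val.map g := by
  rcases Nat.eq_zero_or_pos n with rfl | hn
  · rfl
  rw [← Finset.insert_Icc_sub_one_right_eq_Icc hn,
    Finset.insert_val_of_notMem (by rw [Finset.mem_Icc]; omega), Multiset.map_cons,
    Multiset.map_cons, hlow, htop]

section Exchange

variable {V E : Type*} {src tgt : E → V} {ρ ρ' : V → ℕ → E} {σ : V → ℤ}
  {u : V → ℕ}

theorem IsOdometer.unique (hsrc : ∀ x k, src (ρ x k) = x)
    (hloc : ∀ x : V, {e : E | tgt e = x}.Finite) {u' : V → ℕ}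
    (hu : IsOdometer src tgt ρ σ u) (hu' : IsOdometer src tgt ρ σ u') : u' = u :=
  (hu'.le_of_stable hsrc hloc hu.2.1).antisymm (hu.le_of_stable hsrc hloc hu'.2.1)

theorem IsOdometer.of_exchange (hu : IsOdometer src tgt ρ σ u)
    (hperm : ∀ x,
      (Finset.Icc 1 (u x - 1)).val.map (ρ x) = (Finset.Icc 1 (u x - 1)).val.map (ρ' x))
    (htop : ∀ x, ρ x (u x) = ρ' x (u x)) :
    IsOdometer src tgt ρ' σ u := by
  obtain ⟨hfin, hle, heq, hacyc⟩ := hu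
  have hlap : stackLap src tgt ρ u = stackLap src tgt ρ' u :=
    stackLap_congr fun e => by
      rw [Rcount_eq_countP_map, Rcount_eq_countP_map,
        map_Icc_eq_of_map_Icc_sub_one_eq (hperm _) (htop _)]
  have htop' : (fun x => ρ x (u x)) = fun x => ρ' x (u x) := funext htop
  exact ⟨hfin, hlap ▸ hle, hlap ▸ heq, htop' ▸ hacyc⟩

end Exchange

open Classical in
theorem exchangeability_general {V E : Type*}
    (src tgt : E → V) (ρ ρ' : V → ℕ → E)
    (hsrc' : ∀ x k, src (ρ' x k) = x)
    (hloc : ∀ x : V, {e : E | tgt e = x}.Finite)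
    (σ : V → ℤ) (u u' : V → ℕ)
    (hu : IsOdometer src tgt ρ σ u)
    (hperm : ∀ x : V, Multiset.map (ρ x) (Finset.Icc 1 (u x - 1)).val =
      Multiset.map (ρ' x) (Finset.Icc 1 (u x - 1)).val)
    (htop : ∀ x : V, ρ x (u x) = ρ' x (u x))
    (hu' : IsOdometer src tgt ρ' σ u') :
    u' = u :=
  (hu.of_exchange hperm htop).unique hsrc' hloc hu'

open Classical in
/-- Exchangeability: if for every vertex `x` the rotors `ρ'_1(x),…,ρ'_{u(x)−1}(x)` are a
permutation of `ρ_1(x),…,ρ_{u(x)−1}(x)`, and `ρ_{u(x)}(x) = ρ'_{u(x)}(x)`, where `u` is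
the odometer of `σ` for the stacks `ρ`, then the odometers for `ρ` and `ρ'` agree. -/
theorem exchangeability {V E : Type*}
    (src tgt : E → V) (ρ ρ' : V → ℕ → E)
    (hsrc : ∀ x k, src (ρ x k) = x) (hsrc' : ∀ x k, src (ρ' x k) = x)
    (hloc : ∀ x : V, {e : E | tgt e = x}.Finite)
    (σ : V → ℤ) (u u' : V → ℕ)
    (hu : IsOdometer src tgt ρ σ u)
    (hperm : ∀ x : V, Multiset.map (ρ x) (Finset.Icc 1 (u x - 1)).val =
      Multiset.map (ρ' x) (Finset.Icc 1 (u x - 1)).val)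
    (htop : ∀ x : V, ρ x (u x) = ρ' x (u x))
    (hu' : IsOdometer src tgt ρ' σ u') :
    u' = u :=
  exchangeability_general src tgt ρ ρ' hsrc' hloc σ u u' hu hperm htop hu'
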